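/- Let n ≥ 3 be odd and set m = (n−1)/2. Define G : ℂ^m → ℂ^m by G(z₁, …, z_m) = (e^{2πi(n+2)/(2n)}·z₁, e^{2πi(n+4)/(2n)}·z₂, …, e^{2πi(n+2m)/(2n)}·z_m) (the t-th coordinate is multiplied by e^{2πi(n+2t)/(2n)}; note n + 2m = 2n − 1). Then the quotient of the unit sphere S^{n−2} ⊆ ℝ^{n−1} by the relation X ≈ Y iff Y = ±ℛ_n^l X for some l ∈ ℤ is homeomorphic to the quotient of the unit sphere S^{2m−1} ⊆ ℂ^m by the relation z ≈_G w iff w = G^l(z) for some l ∈ ℤ (both with the quotient topology). (The latter quotient is the orbifold lens space L_{2n}(n+2, n+4, …, 2n−1).) -/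

import Mathlib

noncomputable section

/-- The block-rotation matrix `ℛ_n` (for odd `n`, block diagonal with `2 × 2` rotation blocks
`R_{2π/n}, R_{2·2π/n}, …, R_{((n-1)/2)·2π/n}`). -/
def Rmat (n : ℕ) : Matrix (Fin (n - 1)) (Fin (n - 1)) ℝ :=
  Matrix.of fun i j =>
    let b : ℕ := (i : ℕ) / 2
    let θ : ℝ := 2 * Real.pi * ((b : ℝ) + 1) / n
    if (i : ℕ) % 2 = 0 then
      if (i : ℕ) + 1 < n - 1 then
        if (j : ℕ) = (i : ℕ) then Real.cos θ
        else if (j : ℕ) = (i : ℕ) + 1 then -Real.sin θ else 0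
      else
        if j = i then -1 else 0
    else
      if (j : ℕ) = (i : ℕ) - 1 then Real.sin θ
      else if (j : ℕ) = (i : ℕ) then Real.cos θ else 0

/-- The relation `X ≈ Y` on the unit sphere `S^{n-2} ⊆ ℝ^{n-1}`: `Y = ±ℛ_n^l X`, `l ∈ ℤ`. -/
def apxRel (n : ℕ) (X Y : {v : Fin (n - 1) → ℝ // ∑ i, (v i) ^ 2 = 1}) : Prop :=
  ∃ (l : ℤ) (ε : ℝ), (ε = 1 ∨ ε = -1) ∧
    (Y : Fin (n - 1) → ℝ) = ε • ((Rmat n ^ l).mulVec X)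

/-- The relation `z ≈_G w` on the unit sphere `S^{2m-1} ⊆ ℂ^m` (`m = (n-1)/2`):
`w = G^l(z)` for some `l ∈ ℤ`, where `G` multiplies the `t`-th coordinate (`t = 1, …, m`,
here 0-indexed) by `e^{2πi(n+2t)/(2n)}`, so `G^l` multiplies it by `e^{2πi·l·(n+2t)/(2n)}`. -/
def lensRel (n : ℕ)
    (z w : {v : Fin ((n - 1) / 2) → ℂ // ∑ t, Complex.normSq (v t) = 1}) : Prop :=
  ∃ l : ℤ, ∀ t : Fin ((n - 1) / 2),
    (w : Fin ((n - 1) / 2) → ℂ) t =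
      Complex.exp (2 * Real.pi * Complex.I * (l : ℂ) *
        (((n : ℂ) + 2 * (((t : ℕ) : ℂ) + 1)) / (2 * (n : ℂ)))) *
        (z : Fin ((n - 1) / 2) → ℂ) t

namespace ShapesLens

variable (n : ℕ)

def idxA (t : Fin ((n - 1) / 2)) : Fin (n - 1) :=
  ⟨2 * t, by have := t.isLt; omega⟩

def idxB (t : Fin ((n - 1) / 2)) : Fin (n - 1) :=
  ⟨2 * t + 1, by have := t.isLt; omega⟩

def Fmap (v : Fin (n - 1) → ℝ) (t : Fin ((n - 1) / 2)) : ℂ :=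
  (v (idxA n t) : ℂ) + (v (idxB n t) : ℂ) * Complex.I

lemma Fmap_re (v : Fin (n - 1) → ℝ) (t : Fin ((n - 1) / 2)) :
    (Fmap n v t).re = v (idxA n t) := by simp [Fmap]

lemma Fmap_im (v : Fin (n - 1) → ℝ) (t : Fin ((n - 1) / 2)) :
    (Fmap n v t).im = v (idxB n t) := by simp [Fmap]

lemma Fmap_injective (he : (n - 1) % 2 = 0) {v w : Fin (n - 1) → ℝ}
    (h : ∀ t, Fmap n v t = Fmap n w t) : v = w := by
  funext i
  have hlt : (i : ℕ) / 2 < (n - 1) / 2 := by have := i.isLt; omega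
  set t : Fin ((n - 1) / 2) := ⟨(i : ℕ) / 2, hlt⟩ with ht
  rcases Nat.even_or_odd (i : ℕ) with hp | hp
  · have hi : i = idxA n t := by
      apply Fin.ext
      show (i : ℕ) = 2 * ((i : ℕ) / 2)
      rcases hp with ⟨k, hk⟩; omega
    rw [hi, ← Fmap_re n v t, ← Fmap_re n w t, h t]
  · have hi : i = idxB n t := by
      apply Fin.ext
      show (i : ℕ) = 2 * ((i : ℕ) / 2) + 1
      rcases hp with ⟨k, hk⟩; omega
    rw [hi, ← Fmap_im n v t, ← Fmap_im n w t, h t]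

lemma Fmap_smul (c : ℝ) (v : Fin (n - 1) → ℝ) (t : Fin ((n - 1) / 2)) :
    Fmap n (c • v) t = (c : ℂ) * Fmap n v t := by
  simp [Fmap, Pi.smul_apply, smul_eq_mul]
  push_cast
  ring

def pairEquiv (he : (n - 1) % 2 = 0) : Fin ((n - 1) / 2) × Fin 2 ≃ Fin (n - 1) where
  toFun := fun p => ⟨2 * p.1 + p.2, by have := p.1.isLt; have := p.2.isLt; omega⟩
  invFun := fun i => (⟨(i : ℕ) / 2, by have := i.isLt; omega⟩,
    ⟨(i : ℕ) % 2, Nat.mod_lt _ (by norm_num)⟩)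
  left_inv := fun p => by
    have := p.2.isLt
    ext <;> simp <;> omega
  right_inv := fun i => by
    apply Fin.ext; simp; omega

lemma sum_pairs (he : (n - 1) % 2 = 0) (g : Fin (n - 1) → ℝ) :
    ∑ i, g i = ∑ t : Fin ((n - 1) / 2), (g (idxA n t) + g (idxB n t)) := by
  rw [← Fintype.sum_equiv (pairEquiv n he) (fun p => g (pairEquiv n he p)) g (fun p => rfl)]
  rw [Fintype.sum_prod_type]
  refine Finset.sum_congr rfl fun t _ => ?_
  rw [Fin.sum_univ_two]
  have h0 : pairEquiv n he (t, 0) = idxA n t := by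
    apply Fin.ext; simp [pairEquiv, idxA]
  have h1 : pairEquiv n he (t, 1) = idxB n t := by
    apply Fin.ext; simp [pairEquiv, idxB]
  rw [h0, h1]

lemma sum_normSq (he : (n - 1) % 2 = 0) (v : Fin (n - 1) → ℝ) :
    ∑ t, Complex.normSq (Fmap n v t) = ∑ i, (v i) ^ 2 := by
  rw [sum_pairs n he (fun i => (v i) ^ 2)]
  refine Finset.sum_congr rfl fun t _ => ?_
  simp [Fmap, Complex.normSq_apply]
  ring

def ang (t : Fin ((n - 1) / 2)) : ℝ := 2 * Real.pi * (((t : ℕ) : ℝ) + 1) / n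

lemma ang_cast (hn : 3 ≤ n) (t : Fin ((n - 1) / 2)) :
    ((ang n t : ℝ) : ℂ) = 2 * (Real.pi : ℂ) * (((t : ℕ) : ℂ) + 1) / (n : ℂ) := by
  unfold ang
  push_cast
  ring

lemma Rmat_mulVec_A (v : Fin (n - 1) → ℝ) (t : Fin ((n - 1) / 2)) :
    (Rmat n).mulVec v (idxA n t) =
      Real.cos (ang n t) * v (idxA n t) - Real.sin (ang n t) * v (idxB n t) := by
  have hA2 : ((idxA n t : Fin (n-1)) : ℕ) = 2 * t := rfl
  have hrow : ∀ j : Fin (n - 1), Rmat n (idxA n t) j * v j =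
      (if j = idxA n t then Real.cos (ang n t) * v (idxA n t) else 0) +
      (if j = idxB n t then -Real.sin (ang n t) * v (idxB n t) else 0) := by
    intro j
    have hb := t.isLt
    simp only [Rmat, Matrix.of_apply, hA2]
    have h2 : 2 * (t : ℕ) % 2 = 0 := by omega
    have h3 : 2 * (t : ℕ) + 1 < n - 1 := by omega
    have h4 : 2 * (t : ℕ) / 2 = (t : ℕ) := by omega
    rw [if_pos h2, if_pos h3, h4]
    show (if (j:ℕ) = 2*(t:ℕ) then Real.cos (ang n t) else
      if (j:ℕ) = 2*(t:ℕ)+1 then -Real.sin (ang n t) else 0) * v j = _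
    by_cases hj1 : (j : ℕ) = 2 * (t : ℕ)
    · have h5 : ¬ ((j : ℕ) = 2 * (t : ℕ) + 1) := by omega
      have hje : j = idxA n t := Fin.ext hj1
      have hne : ¬ (j = idxB n t) := fun h => h5 (by rw [h]; rfl)
      rw [if_pos hj1, if_pos hje, if_neg hne, hje]
      ring
    · by_cases hj2 : (j : ℕ) = 2 * (t : ℕ) + 1
      · have hje : j = idxB n t := Fin.ext hj2
        have hne : ¬ (j = idxA n t) := fun h => hj1 (by rw [h]; rfl)
        rw [if_neg hj1, if_pos hj2, if_neg hne, if_pos hje, hje]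
        ring
      · have hne1 : ¬ (j = idxA n t) := fun h => hj1 (by rw [h]; rfl)
        have hne2 : ¬ (j = idxB n t) := fun h => hj2 (by rw [h]; rfl)
        rw [if_neg hj1, if_neg hj2, if_neg hne1, if_neg hne2]
        ring
  unfold Matrix.mulVec dotProduct
  rw [Finset.sum_congr rfl fun j _ => hrow j, Finset.sum_add_distrib,
    Finset.sum_ite_eq' _ (idxA n t), Finset.sum_ite_eq' _ (idxB n t)]
  simp
  ring

lemma Rmat_mulVec_B (v : Fin (n - 1) → ℝ) (t : Fin ((n - 1) / 2)) :
    (Rmat n).mulVec v (idxB n t) =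
      Real.sin (ang n t) * v (idxA n t) + Real.cos (ang n t) * v (idxB n t) := by
  have hB2 : ((idxB n t : Fin (n-1)) : ℕ) = 2 * t + 1 := rfl
  have hrow : ∀ j : Fin (n - 1), Rmat n (idxB n t) j * v j =
      (if j = idxA n t then Real.sin (ang n t) * v (idxA n t) else 0) +
      (if j = idxB n t then Real.cos (ang n t) * v (idxB n t) else 0) := by
    intro j
    have hb := t.isLt
    simp only [Rmat, Matrix.of_apply, hB2]
    have h2 : ¬ ((2 * (t : ℕ) + 1) % 2 = 0) := by omega
    have h4 : (2 * (t : ℕ) + 1) / 2 = (t : ℕ) := by omega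
    rw [if_neg h2, h4]
    show (if (j:ℕ) = 2*(t:ℕ)+1-1 then Real.sin (ang n t) else
      if (j:ℕ) = 2*(t:ℕ)+1 then Real.cos (ang n t) else 0) * v j = _
    by_cases hj1 : (j : ℕ) = 2 * (t : ℕ)
    · have h5 : (j : ℕ) = 2*(t:ℕ)+1-1 := by omega
      have hje : j = idxA n t := Fin.ext hj1
      have hne : ¬ (j = idxB n t) := fun h => by rw [h] at hj1; simp [idxB] at hj1
      rw [if_pos h5, if_pos hje, if_neg hne, hje]
      ring
    · by_cases hj2 : (j : ℕ) = 2 * (t : ℕ) + 1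
      · have h5 : ¬ ((j : ℕ) = 2*(t:ℕ)+1-1) := by omega
        have hje : j = idxB n t := Fin.ext hj2
        have hne : ¬ (j = idxA n t) := fun h => hj1 (by rw [h]; rfl)
        rw [if_neg h5, if_pos hj2, if_neg hne, if_pos hje, hje]
        ring
      · have h5 : ¬ ((j : ℕ) = 2*(t:ℕ)+1-1) := by omega
        have hne1 : ¬ (j = idxA n t) := fun h => hj1 (by rw [h]; rfl)
        have hne2 : ¬ (j = idxB n t) := fun h => hj2 (by rw [h]; rfl)
        rw [if_neg h5, if_neg hj2, if_neg hne1, if_neg hne2]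
        ring
  unfold Matrix.mulVec dotProduct
  rw [Finset.sum_congr rfl fun j _ => hrow j, Finset.sum_add_distrib,
    Finset.sum_ite_eq' _ (idxA n t), Finset.sum_ite_eq' _ (idxB n t)]
  simp

lemma Fmap_step (v : Fin (n - 1) → ℝ) (t : Fin ((n - 1) / 2)) :
    Fmap n ((Rmat n).mulVec v) t = Complex.exp ((ang n t : ℝ) * Complex.I) * Fmap n v t := by
  rw [Complex.exp_mul_I]
  unfold Fmap
  rw [Rmat_mulVec_A, Rmat_mulVec_B]
  rw [show Complex.cos ((ang n t : ℝ)) = ((Real.cos (ang n t) : ℝ) : ℂ) from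
    (Complex.ofReal_cos _).symm,
    show Complex.sin ((ang n t : ℝ)) = ((Real.sin (ang n t) : ℝ) : ℂ) from
    (Complex.ofReal_sin _).symm]
  push_cast
  apply Complex.ext <;> simp <;> ring

lemma Fmap_pow (k : ℕ) (v : Fin (n - 1) → ℝ) (t : Fin ((n - 1) / 2)) :
    Fmap n (((Rmat n) ^ k).mulVec v) t =
      Complex.exp ((k : ℂ) * ((ang n t : ℝ) * Complex.I)) * Fmap n v t := by
  induction k generalizing v with
  | zero => simp [Matrix.one_mulVec]
  | succ k ih =>
    rw [pow_succ', ← Matrix.mulVec_mulVec, Fmap_step, ih, ← mul_assoc, ← Complex.exp_add]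
    congr 2
    push_cast
    ring

lemma Rmat_pow_n (hn : 3 ≤ n) (hodd : Odd n) : (Rmat n) ^ n = 1 := by
  have he : (n - 1) % 2 = 0 := by rcases hodd with ⟨k, hk⟩; omega
  have hmv : ∀ v : Fin (n - 1) → ℝ, ((Rmat n) ^ n).mulVec v = v := by
    intro v
    apply Fmap_injective n he
    intro t
    rw [Fmap_pow]
    have hn0 : (n : ℂ) ≠ 0 := Nat.cast_ne_zero.mpr (by omega)
    have harg : (n : ℂ) * (((ang n t : ℝ) : ℂ) * Complex.I)
        = ((((t : ℕ) : ℤ) + 1 : ℤ) : ℂ) * (2 * (Real.pi : ℂ) * Complex.I) := by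
      rw [ang_cast n hn]
      push_cast
      field_simp
    rw [harg, Complex.exp_int_mul_two_pi_mul_I, one_mul]
  apply Matrix.ext
  intro i j
  have h1 := congrFun (hmv (Pi.single j 1)) i
  rw [Matrix.mulVec_single_one] at h1
  simp only [Matrix.col_apply] at h1
  rw [h1]
  simp [Matrix.one_apply, Pi.single_apply, eq_comm]

lemma Rmat_det_isUnit (hn : 3 ≤ n) (hodd : Odd n) : IsUnit (Rmat n).det := by
  have h : (Rmat n).det ^ n = 1 := by
    rw [← Matrix.det_pow, Rmat_pow_n n hn hodd, Matrix.det_one]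
  have : (Rmat n).det ≠ 0 := by
    intro h0
    rw [h0, zero_pow (by omega)] at h
    exact one_ne_zero h.symm
  exact isUnit_iff_ne_zero.mpr this

lemma exp_ang_congr (hn : 3 ≤ n) (t : Fin ((n - 1) / 2)) {a b : ℤ}
    (hab : a % (n : ℤ) = b % (n : ℤ)) :
    Complex.exp ((a : ℂ) * (((ang n t : ℝ) : ℂ) * Complex.I)) =
      Complex.exp ((b : ℂ) * (((ang n t : ℝ) : ℂ) * Complex.I)) := by
  obtain ⟨c, hc⟩ : ∃ c : ℤ, a = b + (n : ℤ) * c := by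
    have hd : (n : ℤ) ∣ b - a := Int.ModEq.dvd hab
    obtain ⟨c, hc⟩ := hd
    exact ⟨-c, by rw [mul_neg, ← hc]; ring⟩
  have hn0 : (n : ℂ) ≠ 0 := Nat.cast_ne_zero.mpr (by omega)
  have hang : (n : ℂ) * ((ang n t : ℝ) : ℂ) = 2 * (Real.pi : ℂ) * (((t : ℕ) : ℂ) + 1) := by
    rw [ang_cast n hn]
    field_simp
  have harg : (a : ℂ) * (((ang n t : ℝ) : ℂ) * Complex.I) =
      (b : ℂ) * (((ang n t : ℝ) : ℂ) * Complex.I) +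
      ((c * (((t : ℕ) : ℤ) + 1) : ℤ) : ℂ) * (2 * (Real.pi : ℂ) * Complex.I) := by
    rw [hc]
    push_cast
    linear_combination ((c : ℂ) * Complex.I) * hang
  rw [harg, Complex.exp_add, Complex.exp_int_mul_two_pi_mul_I, mul_one]

lemma Fmap_zpow (hn : 3 ≤ n) (hodd : Odd n) (l : ℤ) (v : Fin (n - 1) → ℝ)
    (t : Fin ((n - 1) / 2)) :
    Fmap n (((Rmat n) ^ l).mulVec v) t =
      Complex.exp ((l : ℂ) * (((ang n t : ℝ) : ℂ) * Complex.I)) * Fmap n v t := by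
  have hu := Rmat_det_isUnit n hn hodd
  have hn0 : (0 : ℤ) < (n : ℤ) := by omega
  have h0 : (0:ℤ) ≤ l % n := Int.emod_nonneg l (by omega)
  have hmod : (Rmat n) ^ l = (Rmat n) ^ (l % n).toNat := by
    have h1 : l = ((l % n).toNat : ℤ) + (n : ℤ) * (l / n) := by
      rw [Int.toNat_of_nonneg h0]; exact (Int.emod_add_mul_ediv l (n : ℤ)).symm
    calc (Rmat n) ^ l = (Rmat n) ^ (((l % n).toNat : ℤ) + (n : ℤ) * (l / n)) := by rw [← h1]
    _ = (Rmat n) ^ (((l % n).toNat : ℤ)) * ((Rmat n) ^ ((n : ℕ) : ℤ)) ^ (l / n) := by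
        rw [Matrix.zpow_add hu, Matrix.zpow_mul _ hu]
    _ = (Rmat n) ^ (l % n).toNat := by
        rw [zpow_natCast, zpow_natCast, Rmat_pow_n n hn hodd, Matrix.one_zpow, mul_one]
  rw [hmod, Fmap_pow]
  congr 1
  exact exp_ang_congr n hn t (by rw [Int.toNat_of_nonneg h0, Int.emod_emod_of_dvd _ dvd_rfl])

lemma lens_coef (hn : 3 ≤ n) (l : ℤ) (t : Fin ((n - 1) / 2)) :
    Complex.exp (2 * Real.pi * Complex.I * (l : ℂ) *
        (((n : ℂ) + 2 * (((t : ℕ) : ℂ) + 1)) / (2 * (n : ℂ)))) =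
      (-1 : ℂ) ^ l * Complex.exp ((l : ℂ) * (((ang n t : ℝ) : ℂ) * Complex.I)) := by
  have hn0 : (n : ℂ) ≠ 0 := Nat.cast_ne_zero.mpr (by omega)
  have harg : 2 * (Real.pi : ℂ) * Complex.I * (l : ℂ) *
        (((n : ℂ) + 2 * (((t : ℕ) : ℂ) + 1)) / (2 * (n : ℂ))) =
      (l : ℂ) * ((Real.pi : ℂ) * Complex.I) +
      (l : ℂ) * (((ang n t : ℝ) : ℂ) * Complex.I) := by
    rw [ang_cast n hn]
    field_simp
  rw [harg, Complex.exp_add, Complex.exp_int_mul, Complex.exp_pi_mul_I]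

end ShapesLens

open ShapesLens

/-- For odd `n ≥ 3` and `m = (n-1)/2`, the quotient `S^{n-2}/⟨ℛ_n, ν⟩` is
homeomorphic to the orbifold lens space `L_{2n}(n+2, n+4, …, 2n−1) = S^{2m-1}/⟨G⟩`. -/
theorem shapes_homeomorph_lens (n : ℕ) (hn : 3 ≤ n) (hodd : Odd n) :
    Nonempty (Quot (apxRel n) ≃ₜ Quot (lensRel n)) := by
  have he : (n - 1) % 2 = 0 := by rcases hodd with ⟨k, hk⟩; omega
  -- the sphere types
  set S1 := {v : Fin (n - 1) → ℝ // ∑ i, (v i) ^ 2 = 1} with hS1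
  set S2 := {v : Fin ((n - 1) / 2) → ℂ // ∑ t, Complex.normSq (v t) = 1} with hS2
  -- the map between spheres
  have hmem : ∀ X : S1, ∑ t, Complex.normSq (Fmap n (X : Fin (n-1) → ℝ) t) = 1 := by
    intro X; rw [sum_normSq n he]; exact X.2
  let f : S1 → S2 := fun X => ⟨Fmap n X.1, hmem X⟩
  have hinj : Function.Injective f := by
    intro X Y hXY
    apply Subtype.ext
    apply Fmap_injective n he
    intro t
    exact congrFun (congrArg Subtype.val hXY) t
  have hsurj : Function.Surjective f := by
    intro w
    let v : Fin (n - 1) → ℝ := fun i =>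
      if (i : ℕ) % 2 = 0 then (w.1 ⟨(i : ℕ) / 2, by have := i.isLt; omega⟩).re
      else (w.1 ⟨(i : ℕ) / 2, by have := i.isLt; omega⟩).im
    have hFv : ∀ t, Fmap n v t = w.1 t := by
      intro t
      have hA : v (idxA n t) = (w.1 t).re := by
        show (if (2 * (t:ℕ)) % 2 = 0 then _ else _) = _
        rw [if_pos (by omega)]
        exact congrArg (fun z => ((w : Fin ((n-1)/2) → ℂ) z).re)
          (Fin.ext (show 2 * (t:ℕ) / 2 = (t:ℕ) by omega))
      have hB : v (idxB n t) = (w.1 t).im := by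
        show (if (2 * (t:ℕ) + 1) % 2 = 0 then _ else _) = _
        rw [if_neg (by omega)]
        exact congrArg (fun z => ((w : Fin ((n-1)/2) → ℂ) z).im)
          (Fin.ext (show (2 * (t:ℕ) + 1) / 2 = (t:ℕ) by omega))
      unfold Fmap
      rw [hA, hB, Complex.re_add_im]
    refine ⟨⟨v, ?_⟩, ?_⟩
    · rw [← sum_normSq n he]
      rw [Finset.sum_congr rfl fun t _ => by rw [hFv t]]
      exact w.2
    · exact Subtype.ext (funext hFv)
  let e : S1 ≃ S2 := Equiv.ofBijective f ⟨hinj, hsurj⟩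
  have hfc : Continuous f := by
    apply Continuous.subtype_mk
    apply continuous_pi
    intro t
    exact ((Complex.continuous_ofReal.comp
      ((continuous_apply (idxA n t)).comp continuous_subtype_val)).add
      ((Complex.continuous_ofReal.comp
        ((continuous_apply (idxB n t)).comp continuous_subtype_val)).mul continuous_const))
  have hcpt : IsCompact {v : Fin (n - 1) → ℝ | ∑ i, (v i) ^ 2 = 1} := by
    apply IsCompact.of_isClosed_subset
      (isCompact_univ_pi (fun _ : Fin (n-1) => isCompact_Icc (a := (-1:ℝ)) (b := 1)))
    · exact isClosed_eq (by fun_prop) continuous_const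
    · intro v hv
      simp only [Set.mem_setOf_eq] at hv
      intro i _
      have hle : (v i) ^ 2 ≤ 1 := by
        rw [← hv]
        exact Finset.single_le_sum (fun j _ => sq_nonneg (v j)) (Finset.mem_univ i)
      constructor
      · nlinarith [sq_nonneg (v i + 1)]
      · nlinarith [sq_nonneg (v i - 1)]
  have hcomp : CompactSpace S1 := isCompact_iff_compactSpace.mp hcpt
  let E : S1 ≃ₜ S2 := hfc.homeoOfEquivCompactToT2 (f := e)
  -- relation compatibility
  have hrel : ∀ X Y : S1, apxRel n X Y ↔ lensRel n (e X) (e Y) := by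
    intro X Y
    constructor
    · rintro ⟨l, ε, hε, hY⟩
      refine ⟨if ε = 1 then l * ((n : ℤ) + 1) else l * ((n : ℤ) + 1) + n, ?_⟩
      intro t
      set l' : ℤ := if ε = 1 then l * ((n : ℤ) + 1) else l * ((n : ℤ) + 1) + n with hl'
      have hmod : l' % (n : ℤ) = l % (n : ℤ) := by
        have h1 : l * ((n : ℤ) + 1) = l + (n : ℤ) * l := by ring
        rcases hε with h | h <;> simp only [hl', h] <;> norm_num <;>
          rw [h1] <;> simp [Int.add_mul_emod_self_left]
      have hpar : (-1 : ℂ) ^ l' = (ε : ℂ) := by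
        rcases hε with h | h
        · rw [hl', if_pos h, h]
          have : Even (l * ((n : ℤ) + 1)) := by
            rcases hodd with ⟨k, hk⟩
            exact ⟨l * (k + 1), by push_cast [hk]; ring⟩
          rw [this.neg_one_zpow]
          norm_num
        · have hne : ε ≠ 1 := by rw [h]; norm_num
          rw [hl', if_neg hne, h]
          have : Odd (l * ((n : ℤ) + 1) + n) := by
            rcases hodd with ⟨k, hk⟩
            exact ⟨l * (k + 1) + k, by push_cast [hk]; ring⟩
          rw [this.neg_one_zpow]
          norm_num
      show Fmap n Y.1 t = _ * Fmap n X.1 t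
      rw [lens_coef n hn l' t, hpar,
        exp_ang_congr n hn t hmod, hY, Fmap_smul, Fmap_zpow n hn hodd]
      ring
    · rintro ⟨l, h⟩
      refine ⟨l, if Even l then (1:ℝ) else -1, by split <;> simp, ?_⟩
      set ε : ℝ := if Even l then (1:ℝ) else -1 with hε
      have hpar : (-1 : ℂ) ^ l = (ε : ℂ) := by
        by_cases hev : Even l
        · rw [hε, if_pos hev, hev.neg_one_zpow]; norm_num
        · rw [hε, if_neg hev, (Int.not_even_iff_odd.mp hev).neg_one_zpow]; norm_num
      apply Fmap_injective n he
      intro t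
      have ht : Fmap n (Y : Fin (n - 1) → ℝ) t =
          Complex.exp (2 * Real.pi * Complex.I * (l : ℂ) *
            (((n : ℂ) + 2 * (((t : ℕ) : ℂ) + 1)) / (2 * (n : ℂ)))) *
          Fmap n (X : Fin (n - 1) → ℝ) t := h t
      rw [lens_coef n hn l t] at ht
      show Fmap n Y.1 t = Fmap n (ε • (Rmat n ^ l).mulVec X.1) t
      rw [Fmap_smul, Fmap_zpow n hn hodd]
      rw [ht, hpar]
      ring
  -- build the homeomorphism of quotients
  have hrel' : ∀ X Y : S1, apxRel n X Y ↔ lensRel n (E X) (E Y) := hrel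
  refine ⟨{ toEquiv := Quot.congr E.toEquiv hrel', continuous_toFun := ?_, continuous_invFun := ?_ }⟩
  · apply isQuotientMap_quot_mk.continuous_iff.mpr
    exact continuous_quot_mk.comp E.continuous
  · apply isQuotientMap_quot_mk.continuous_iff.mpr
    exact continuous_quot_mk.comp E.symm.continuous
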